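/- Let e be the H^{-1} energy density associated to f as above. Then ∂e(0) = (−∞, 0]. -/

import Mathlib

/-!
Convexity and `f 0 = 0` give the chord bound `f s ≤ (s / y) f y` on `[0, y]`, hence
`∫₀ʸ f ≤ y f(y) / 2` and `e ≥ 0 = e(0)` on `[0, ∞)`; as `e = +∞` on `(-∞, 0)`, every `p ≤ 0` is a
subgradient at `0`. Conversely, near `0⁺` the chord bound (from above) and lower semicontinuity
at `0` (from below) squeeze `f` to `0`, so `e(y) = o(y)` and no `p > 0` is a subgradient.
-/

open Filter Set Topology MeasureTheory

noncomputable section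
open scoped Classical

/-- Convexity for extended-real-valued functions on `ℝ`. -/
def EConvex (f : ℝ → EReal) : Prop :=
  ∀ x y t : ℝ, 0 ≤ t → t ≤ 1 →
    f (t * x + (1 - t) * y) ≤ (t : EReal) * f x + ((1 - t : ℝ) : EReal) * f y

/-- Subdifferential of an extended-real-valued function:
`∂g(x) = { p : p(y − x) + g(x) ≤ g(y) for all y }`. -/
def esubdiff (g : ℝ → EReal) (x : ℝ) : Set ℝ :=
  {p : ℝ | ∀ y : ℝ, ((p * (y - x) : ℝ) : EReal) + g x ≤ g y}

/-- The `H^{-1}` energy density associated to `f`: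
`e(a) = a·f(a) − 2∫₀ᵃ f(s) ds` for `a ∈ dom f`, `+∞` otherwise. -/
def eDen (f : ℝ → EReal) (a : ℝ) : EReal :=
  if f a = ⊤ then ⊤
  else ((a * (f a).toReal - 2 * ∫ s in (0 : ℝ)..a, (f s).toReal : ℝ) : EReal)

variable {f : ℝ → EReal}

theorem eDen_of_eq_top {a : ℝ} (h : f a = ⊤) : eDen f a = ⊤ := by
  simp [eDen, h]

theorem eDen_of_ne_top {a : ℝ} (h : f a ≠ ⊤) :
    eDen f a = ((a * (f a).toReal - 2 * ∫ s in (0 : ℝ)..a, (f s).toReal : ℝ) : EReal) := by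
  simp [eDen, h]

theorem eDen_zero (hf0 : f 0 = 0) : eDen f 0 = 0 := by
  simp [eDen_of_ne_top (hf0 ▸ EReal.zero_ne_top), hf0]

theorem eDen_le_of_bounds {y M m : ℝ} (hy : 0 ≤ y) (hfy : f y ≠ ⊤)
    (hint : IntervalIntegrable (fun s => (f s).toReal) volume 0 y)
    (hM : (f y).toReal ≤ M) (hm : ∀ s ∈ Icc 0 y, m ≤ (f s).toReal) :
    eDen f y ≤ ((y * (M - 2 * m) : ℝ) : EReal) := by
  rw [eDen_of_ne_top hfy, EReal.coe_le_coe_iff]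
  have hlow : m * y ≤ ∫ s in (0 : ℝ)..y, (f s).toReal := by
    simpa [mul_comm] using
      intervalIntegral.integral_mono_on hy intervalIntegrable_const hint hm
  nlinarith

namespace EConvex

/-- If `f z = ⊥`, convexity forces `f = ⊥` on the segment `(x₀, z]`, against lower
semicontinuity at `x₀`. -/
theorem ne_bot (hconv : EConvex f) (hlsc : LowerSemicontinuous f) {x₀ : ℝ} (hx₀ : f x₀ ≠ ⊥)
    (z : ℝ) : f z ≠ ⊥ := by
  intro hz
  have hseg : Tendsto (fun t : ℝ => t * z + (1 - t) * x₀) (𝓝[>] 0) (𝓝 x₀) := by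
    have hcont : Continuous fun t : ℝ => t * z + (1 - t) * x₀ := by fun_prop
    simpa using (hcont.tendsto 0).mono_left nhdsWithin_le_nhds
  obtain ⟨t, hlt, ht⟩ := ((hseg.eventually (hlsc x₀ ⊥ (bot_lt_iff_ne_bot.2 hx₀))).and
    (Ioc_mem_nhdsGT one_pos)).exists
  have hle := hconv z x₀ t ht.1.le ht.2
  rw [hz, EReal.coe_mul_bot_of_pos ht.1, EReal.bot_add] at hle
  exact hlt.ne' (le_bot_iff.1 hle)

variable (hconv : EConvex f) (hf0 : f 0 = 0)
include hconv hf0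

theorem le_div_mul {s c : ℝ} (hc : 0 < c) (hs : s ∈ Icc 0 c) :
    f s ≤ ((s / c : ℝ) : EReal) * f c := by
  have := hconv c 0 (s / c) (div_nonneg hs.1 hc.le) (div_le_one_of_le₀ hs.2 hc.le)
  rwa [mul_zero, add_zero, div_mul_cancel₀ _ hc.ne', hf0, mul_zero, add_zero] at this

variable (hbot : ∀ x, f x ≠ ⊥)
include hbot

theorem ne_top_of_mem_Icc {s c : ℝ} (hc : 0 < c) (hfc : f c ≠ ⊤) (hs : s ∈ Icc 0 c) :
    f s ≠ ⊤ := by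
  have hle := hconv.le_div_mul hf0 hc hs
  rw [← EReal.coe_toReal hfc (hbot c), ← EReal.coe_mul] at hle
  exact ne_top_of_le_ne_top (EReal.coe_ne_top _) hle

theorem toReal_le_div_mul {s c : ℝ} (hc : 0 < c) (hfc : f c ≠ ⊤) (hs : s ∈ Icc 0 c) :
    (f s).toReal ≤ s / c * (f c).toReal := by
  have hle := hconv.le_div_mul hf0 hc hs
  rw [← EReal.coe_toReal hfc (hbot c), ← EReal.coe_mul] at hle
  simpa only [EReal.toReal_coe] using EReal.toReal_le_toReal hle (hbot s) (EReal.coe_ne_top _)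

/-- On `[0, c]` the function is bounded above by its chord and below by its minimum, which
exists by lower semicontinuity. -/
theorem intervalIntegrable_toReal (hlsc : LowerSemicontinuous f) {c : ℝ} (hc : 0 < c)
    (hfc : f c ≠ ⊤) : IntervalIntegrable (fun s => (f s).toReal) volume 0 c := by
  obtain ⟨m, -, hmin⟩ := (hlsc.lowerSemicontinuousOn (Icc 0 c)).exists_isMinOn
    (nonempty_Icc.2 hc.le) isCompact_Icc
  have hbdd : ∀ s ∈ Icc 0 c, |(f s).toReal| ≤ |(f m).toReal| + |(f c).toReal| := by
    intro s hs
    have hlow : (f m).toReal ≤ (f s).toReal :=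
      EReal.toReal_le_toReal (hmin hs) (hbot m) (hconv.ne_top_of_mem_Icc hf0 hbot hc hfc hs)
    have hup : (f s).toReal ≤ |(f c).toReal| :=
      (hconv.toReal_le_div_mul hf0 hbot hc hfc hs).trans <|
        (mul_le_mul_of_nonneg_left (le_abs_self _) (div_nonneg hs.1 hc.le)).trans
          (mul_le_of_le_one_left (abs_nonneg _) (div_le_one_of_le₀ hs.2 hc.le))
    exact abs_le.2 ⟨by linarith [neg_abs_le (f m).toReal, abs_nonneg (f c).toReal],
      by linarith [abs_nonneg (f m).toReal]⟩
  rw [intervalIntegrable_iff_integrableOn_Icc_of_le hc.le]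
  exact Measure.integrableOn_of_bounded measure_Icc_lt_top.ne
    hlsc.measurable.ereal_toReal.aestronglyMeasurable
    ((ae_restrict_iff' measurableSet_Icc).2 (Eventually.of_forall hbdd))

theorem eDen_nonneg (hlsc : LowerSemicontinuous f) {y : ℝ} (hy : 0 ≤ y) : 0 ≤ eDen f y := by
  rcases hy.eq_or_lt with rfl | hy
  · rw [eDen_zero hf0]
  by_cases hfy : f y = ⊤
  · simp [eDen_of_eq_top hfy]
  have hint := hconv.intervalIntegrable_toReal hf0 hbot hlsc hy hfy
  have hchord : (∫ s in (0 : ℝ)..y, (f s).toReal) ≤ ∫ s in (0 : ℝ)..y, s * ((f y).toReal / y) :=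
    intervalIntegral.integral_mono_on hy.le hint
      ((by fun_prop : Continuous fun s : ℝ => s * ((f y).toReal / y)).intervalIntegrable _ _)
      fun s hs => (hconv.toReal_le_div_mul hf0 hbot hy hfy hs).trans_eq (by ring)
  have hval : (∫ s in (0 : ℝ)..y, s * ((f y).toReal / y)) = y * (f y).toReal / 2 := by
    rw [intervalIntegral.integral_mul_const, integral_id]
    field_simp
    ring
  rw [eDen_of_ne_top hfy]
  exact_mod_cast (by linarith : (0 : ℝ) ≤ y * (f y).toReal - 2 * ∫ s in (0 : ℝ)..y, (f s).toReal)

/-- Near `0⁺` the chord bounds `f` above by `o(1)` and lower semicontinuity bounds it below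
by `-o(1)`, so `e(y) = y f(y) - 2 ∫₀ʸ f = o(y)`. -/
theorem exists_eDen_le_mul (hlsc : LowerSemicontinuous f) {a : ℝ} (ha : 0 < a) (hfa : f a ≠ ⊤)
    {ε : ℝ} (hε : 0 < ε) : ∃ y > 0, eDen f y ≤ ((ε * y : ℝ) : EReal) := by
  have hlow : ∀ᶠ s in 𝓝[≥] (0 : ℝ), ((-(ε / 3) : ℝ) : EReal) < f s :=
    (hlsc 0 _ (show _ < f 0 by rw [hf0]; exact_mod_cast (by linarith : -(ε / 3) < 0))).filter_mono
      nhdsWithin_le_nhds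
  obtain ⟨u, hu, hIco⟩ := mem_nhdsGE_iff_exists_Ico_subset.1 hlow
  have hchord : ∀ᶠ y in 𝓝 (0 : ℝ), y / a * (f a).toReal < ε / 3 := by
    have hcont : Continuous fun y : ℝ => y / a * (f a).toReal := by fun_prop
    exact hcont.tendsto 0 |>.eventually (gt_mem_nhds (by simp [hε]))
  have hnear : ∀ᶠ y in 𝓝[>] (0 : ℝ), y < u ∧ y ≤ a ∧ y / a * (f a).toReal < ε / 3 :=
    nhdsWithin_le_nhds ((eventually_lt_nhds hu).and ((eventually_le_nhds ha).and hchord))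
  obtain ⟨y, ⟨hyu, hya, hyε⟩, hy0⟩ := (hnear.and eventually_mem_nhdsWithin).exists
  have hya' : y ∈ Icc 0 a := ⟨hy0.le, hya⟩
  have hfy := hconv.ne_top_of_mem_Icc hf0 hbot ha hfa hya'
  have hup : (f y).toReal ≤ ε / 3 := (hconv.toReal_le_div_mul hf0 hbot ha hfa hya').trans hyε.le
  have hdown : ∀ s ∈ Icc 0 y, -(ε / 3) ≤ (f s).toReal := fun s hs =>
    (EReal.coe_lt_coe_iff.1 ((hIco ⟨hs.1, hs.2.trans_lt hyu⟩).trans_le (EReal.le_coe_toReal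
      (hconv.ne_top_of_mem_Icc hf0 hbot ha hfa ⟨hs.1, hs.2.trans hya⟩)))).le
  refine ⟨y, hy0, ?_⟩
  calc eDen f y ≤ ((y * (ε / 3 - 2 * -(ε / 3)) : ℝ) : EReal) :=
        eDen_le_of_bounds (hy0.le) hfy
          (hconv.intervalIntegrable_toReal hf0 hbot hlsc hy0 hfy) hup hdown
    _ = ((ε * y : ℝ) : EReal) := by congr 1; ring

end EConvex

theorem exists_pos_ne_top (hneg : ∀ a : ℝ, a < 0 → f a = ⊤)
    (hdom : (interior {a : ℝ | f a ≠ ⊤}).Nonempty) : ∃ a, 0 < a ∧ f a ≠ ⊤ := by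
  obtain ⟨x, hx⟩ := hdom
  have hdom' : ∀ᶠ a in 𝓝[>] x, f a ≠ ⊤ := nhdsWithin_le_nhds (mem_interior_iff_mem_nhds.1 hx)
  obtain ⟨a, hfa, hxa⟩ := (hdom'.and eventually_mem_nhdsWithin).exists
  have hx0 : 0 ≤ x := not_lt.1 fun h => interior_subset hx (hneg x h)
  exact ⟨a, hx0.trans_lt hxa, hfa⟩

/-- The subdifferential at `0` of the `H^{-1}` energy density is `(−∞, 0]`. -/
theorem statement7 (f : ℝ → EReal) (hconv : EConvex f)
    (hlsc : LowerSemicontinuous f) (hf0 : f 0 = 0)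
    (hneg : ∀ a : ℝ, a < 0 → f a = ⊤)
    (hdom : (interior {a : ℝ | f a ≠ ⊤}).Nonempty) :
    esubdiff (eDen f) 0 = Set.Iic (0 : ℝ) := by
  have hbot : ∀ x, f x ≠ ⊥ := hconv.ne_bot hlsc (hf0 ▸ EReal.zero_ne_bot)
  ext p
  simp only [esubdiff, mem_ofPred_eq, mem_Iic, sub_zero, eDen_zero hf0, add_zero]
  constructor
  · intro hp
    obtain ⟨a, ha, hfa⟩ := exists_pos_ne_top hneg hdom
    refine le_of_forall_gt_imp_ge_of_dense fun ε hε => ?_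
    obtain ⟨y, hy, hey⟩ := hconv.exists_eDen_le_mul hf0 hbot hlsc ha hfa hε
    exact le_of_mul_le_mul_right (EReal.coe_le_coe_iff.1 ((hp y).trans hey)) hy
  · intro hp y
    rcases lt_or_ge y 0 with hy | hy
    · simp [eDen_of_eq_top (hneg y hy)]
    · exact (EReal.coe_nonpos.2 (mul_nonpos_of_nonpos_of_nonneg hp hy)).trans
        (hconv.eDen_nonneg hf0 hbot hlsc hy)
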